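/- arXiv:2503.07699 — 4 statements merged into one kernel-verified Lean document; each statement's English description precedes it below -/
import Mathlib

section
/- Let d ≥ 1, σ > 0, ε_μ ∈ ℝ^d, x₀ ∈ ℝ^d, let (α_s)_{s≥1} be reals in (0,1), β_s = √(1−α_s²), and ᾱ_t = ∏_{s=1}^t α_s². Let (E_s)_{s≥1} be independent random vectors in ℝ^d, each with the isotropic Gaussian law of mean 0 and covariance σ²·I (i.e. the product over coordinates of one-dimensional Gaussian measures N(0,σ²)). Define X₀ = x₀ and X_t = α_t·X_{t−1} + (1−α_t)·ε_μ + β_t·E_t for t ≥ 1. Then for every t ≥ 1 the law of X_t is the isotropic Gaussian on ℝ^d with mean √ᾱ_t·x₀ + (1−√ᾱ_t)·ε_μ and covariance (1−ᾱ_t)σ²·I. -/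
open MeasureTheory ProbabilityTheory Real Finset
open scoped ENNReal NNReal

lemma my_pi_dirac {ι : Type*} [Fintype ι] {α : ι → Type*} [∀ i, MeasurableSpace (α i)]
    (x : ∀ i, α i) :
    Measure.pi (fun i => Measure.dirac (x i)) = Measure.dirac x := by
  refine Measure.pi_eq fun s hs => ?_
  rw [Measure.dirac_apply' _ (MeasurableSet.univ_pi hs)]
  by_cases h : ∀ i, x i ∈ s i
  · rw [Set.indicator_of_mem (by simpa using h)]
    rw [Finset.prod_eq_one (fun i _ => Measure.dirac_apply_of_mem (h i))]
    rfl
  · push_neg at h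
    obtain ⟨i, hi⟩ := h
    rw [Set.indicator_of_notMem (by simp only [Set.mem_univ_pi, not_forall]; exact ⟨i, hi⟩)]
    exact (Finset.prod_eq_zero (Finset.mem_univ i)
      (by rw [Measure.dirac_apply' _ (hs i), Set.indicator_of_notMem hi])).symm


lemma gaussianPDFReal_mul (m μ : ℝ) (v w : ℝ≥0) (hv : v ≠ 0) (hw : w ≠ 0) (x y : ℝ) :
    gaussianPDFReal m v x * gaussianPDFReal (μ + x) w y =
      gaussianPDFReal (m + μ) (v + w) y *
        gaussianPDFReal ((w * m + v * (y - μ)) / (v + w)) (v * w / (v + w)) x := by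
  have hV : (0:ℝ) < v := lt_of_le_of_ne v.coe_nonneg (by exact_mod_cast (Ne.symm hv))
  have hW : (0:ℝ) < w := lt_of_le_of_ne w.coe_nonneg (by exact_mod_cast (Ne.symm hw))
  have hVW : (0:ℝ) < (v:ℝ) + w := by positivity
  simp only [gaussianPDFReal, NNReal.coe_add, NNReal.coe_mul, NNReal.coe_div]
  rw [mul_mul_mul_comm, mul_mul_mul_comm ((√(2 * π * ((v:ℝ) + w)))⁻¹),
    ← Real.exp_add, ← Real.exp_add, ← mul_inv, ← mul_inv,
    ← Real.sqrt_mul (by positivity), ← Real.sqrt_mul (by positivity)]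
  congr 1
  · rw [inv_inj]
    congr 1
    field_simp
  · rw [Real.exp_eq_exp]
    field_simp
    ring


lemma lintegral_gaussianPDF_conv (m μ : ℝ) (v w : ℝ≥0) (hv : v ≠ 0) (hw : w ≠ 0) (y : ℝ) :
    ∫⁻ x, gaussianPDF m v x * gaussianPDF (μ + x) w y = gaussianPDF (m + μ) (v + w) y := by
  have hvw : v * w / (v + w) ≠ 0 := by
    simp [div_eq_zero_iff, add_eq_zero, hv, hw]
  simp only [gaussianPDF]
  have heq : ∀ x, ENNReal.ofReal (gaussianPDFReal m v x) *
      ENNReal.ofReal (gaussianPDFReal (μ + x) w y) =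
      ENNReal.ofReal (gaussianPDFReal (m + μ) (v + w) y) *
        ENNReal.ofReal (gaussianPDFReal ((w * m + v * (y - μ)) / (v + w)) (v * w / (v + w)) x) := by
    intro x
    rw [← ENNReal.ofReal_mul (gaussianPDFReal_nonneg _ _ _),
      ← ENNReal.ofReal_mul (gaussianPDFReal_nonneg _ _ _),
      gaussianPDFReal_mul m μ v w hv hw x y]
  simp_rw [heq]
  rw [lintegral_const_mul _ ((measurable_gaussianPDFReal _ _).ennreal_ofReal),
    lintegral_gaussianPDFReal_eq_one _ hvw, mul_one]


lemma gaussianReal_conv (m μ : ℝ) (v w : ℝ≥0) :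
    Measure.map (fun p : ℝ × ℝ => p.1 + p.2) ((gaussianReal m v).prod (gaussianReal μ w))
      = gaussianReal (m + μ) (v + w) := by
  by_cases hv : v = 0
  · subst hv
    rw [gaussianReal_zero_var, Measure.dirac_prod,
      Measure.map_map measurable_add measurable_prodMk_left]
    have : ((fun p : ℝ × ℝ => p.1 + p.2) ∘ Prod.mk m) = (m + ·) := rfl
    rw [this, gaussianReal_map_const_add, add_comm, zero_add]
  by_cases hw : w = 0
  · subst hw
    rw [gaussianReal_zero_var, Measure.prod_dirac,
      Measure.map_map measurable_add measurable_prodMk_right]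
    have : ((fun p : ℝ × ℝ => p.1 + p.2) ∘ (fun x => (x, μ))) = (· + μ) := rfl
    rw [this, gaussianReal_map_add_const, add_zero]
  -- main case
  have hFmeas : Measurable (fun p : ℝ × ℝ => gaussianPDF (μ + p.1) w p.2) := by
    apply ENNReal.measurable_ofReal.comp
    have : Continuous (fun p : ℝ × ℝ => gaussianPDFReal (μ + p.1) w p.2) := by
      unfold gaussianPDFReal
      fun_prop
    exact this.measurable
  ext s hs
  rw [Measure.map_apply measurable_add hs, Measure.prod_apply (measurable_add hs)]
  have h1 : ∀ x : ℝ, (Prod.mk x ⁻¹' ((fun p : ℝ × ℝ => p.1 + p.2) ⁻¹' s)) = (x + ·) ⁻¹' s :=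
    fun x => rfl
  have h2 : ∀ x : ℝ, (gaussianReal μ w) ((x + ·) ⁻¹' s) =
      ∫⁻ y in s, gaussianPDF (μ + x) w y := by
    intro x
    rw [← Measure.map_apply (measurable_const_add x) hs, gaussianReal_map_const_add,
      gaussianReal_apply _ hw]
  simp_rw [h1, h2]
  rw [gaussianReal_of_var_ne_zero m hv,
    lintegral_withDensity_eq_lintegral_mul _ (measurable_gaussianPDF m v)
      (by exact Measurable.lintegral_prod_right hFmeas)]
  have h3 : ∀ x, (gaussianPDF m v * fun x => ∫⁻ y in s, gaussianPDF (μ + x) w y) x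
      = ∫⁻ y in s, gaussianPDF m v x * gaussianPDF (μ + x) w y := by
    intro x
    simp only [Pi.mul_apply]
    rw [lintegral_const_mul _ (measurable_gaussianPDF _ _)]
  simp_rw [h3]
  rw [lintegral_lintegral_swap]
  · rw [gaussianReal_apply _ (by simp [add_eq_zero, hv, hw]) s]
    refine lintegral_congr fun y => ?_
    exact lintegral_gaussianPDF_conv m μ v w hv hw y
  · exact (((measurable_gaussianPDF m v).comp measurable_fst).mul hFmeas).aemeasurable


lemma gaussianReal_affine_pair (a b c m : ℝ) (u w : ℝ≥0) :
    Measure.map (fun p : ℝ × ℝ => a * p.1 + c + b * p.2)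
      ((gaussianReal m u).prod (gaussianReal 0 w))
      = gaussianReal (a * m + c) (⟨a ^ 2, sq_nonneg a⟩ * u + ⟨b ^ 2, sq_nonneg b⟩ * w) := by
  have hcomp : (fun p : ℝ × ℝ => a * p.1 + c + b * p.2)
      = (fun p : ℝ × ℝ => p.1 + p.2) ∘ (Prod.map (fun x => a * x + c) (fun y => b * y)) := rfl
  have hf : Measurable (fun x : ℝ => a * x + c) := (measurable_const_mul a).add_const c
  have hg : Measurable (fun y : ℝ => b * y) := measurable_const_mul b
  rw [hcomp, ← Measure.map_map measurable_add (hf.prodMap hg),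
    ← Measure.map_prod_map _ _ hf hg]
  have h1 : Measure.map (fun x : ℝ => a * x + c) (gaussianReal m u)
      = gaussianReal (a * m + c) (⟨a ^ 2, sq_nonneg a⟩ * u) := by
    have : (fun x : ℝ => a * x + c) = (· + c) ∘ (a * ·) := rfl
    rw [this, ← Measure.map_map (measurable_add_const c) (measurable_const_mul a),
      gaussianReal_map_const_mul, gaussianReal_map_add_const]
    rfl
  have h2 : Measure.map (fun y : ℝ => b * y) (gaussianReal 0 w)
      = gaussianReal 0 (⟨b ^ 2, sq_nonneg b⟩ * w) := by
    rw [gaussianReal_map_const_mul, mul_zero]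
    rfl
  rw [h1, h2, gaussianReal_conv, add_zero]


lemma map_affine_pi {d : ℕ} (a b : ℝ) (c m : Fin d → ℝ) (u w : ℝ≥0)
    {Ω : Type*} [MeasurableSpace Ω] {P : Measure Ω} [IsProbabilityMeasure P]
    {Y Z : Ω → Fin d → ℝ} (hY : Measurable Y) (hZ : Measurable Z)
    (hind : IndepFun Y Z P)
    (hYlaw : Measure.map Y P = Measure.pi fun i => gaussianReal (m i) u)
    (hZlaw : Measure.map Z P = Measure.pi fun i => gaussianReal 0 w) :
    Measure.map (fun ω i => a * Y ω i + c i + b * Z ω i) P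
      = Measure.pi fun i => gaussianReal (a * m i + c i)
          (⟨a ^ 2, sq_nonneg a⟩ * u + ⟨b ^ 2, sq_nonneg b⟩ * w) := by
  have hF : Measurable (fun p : (Fin d → ℝ) × (Fin d → ℝ) => fun i => a * p.1 i + c i + b * p.2 i) := by
    fun_prop
  have hprod : Measure.map (fun ω => (Y ω, Z ω)) P = (Measure.map Y P).prod (Measure.map Z P) :=
    (indepFun_iff_map_prod_eq_prod_map_map hY.aemeasurable hZ.aemeasurable).mp hind
  have hcomp : (fun ω i => a * Y ω i + c i + b * Z ω i)
      = (fun p : (Fin d → ℝ) × (Fin d → ℝ) => fun i => a * p.1 i + c i + b * p.2 i)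
        ∘ (fun ω => (Y ω, Z ω)) := rfl
  rw [hcomp, ← Measure.map_map hF (hY.prodMk hZ), hprod, hYlaw, hZlaw,
    ← (measurePreserving_arrowProdEquivProdArrow ℝ ℝ (Fin d)
        (fun i => gaussianReal (m i) u) (fun i => gaussianReal 0 w)).map_eq,
    Measure.map_map hF (MeasurableEquiv.arrowProdEquivProdArrow ℝ ℝ (Fin d)).measurable]
  have hcomp2 : ((fun p : (Fin d → ℝ) × (Fin d → ℝ) => fun i => a * p.1 i + c i + b * p.2 i)
      ∘ (MeasurableEquiv.arrowProdEquivProdArrow ℝ ℝ (Fin d)))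
      = fun (h : Fin d → ℝ × ℝ) i => a * (h i).1 + c i + b * (h i).2 := rfl
  rw [hcomp2]
  exact (measurePreserving_pi _ _
    (fun i => ⟨((measurable_fst.const_mul a).add_const (c i)).add (measurable_snd.const_mul b),
      gaussianReal_affine_pair a b (c i) (m i) u w⟩)).map_eq


/-- **RayFlow forward marginal.** The RayFlow forward chain
`X_t = α_t X_{t-1} + (1-α_t) ε_μ + β_t E_t` (with `β_t = √(1-α_t²)` and `E_t`
i.i.d. isotropic Gaussians of mean 0 and covariance `σ² I`) has marginal law the
isotropic Gaussian with mean `√ᾱ_t x₀ + (1-√ᾱ_t) ε_μ` and covariance `(1-ᾱ_t) σ² I`,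
where `ᾱ_t = ∏_{s=1}^t α_s²`. -/
theorem rayflow_forward_marginal
    {Ω : Type*} [MeasurableSpace Ω] (P : Measure Ω) [IsProbabilityMeasure P]
    (d : ℕ) (hd : 1 ≤ d) (σ : ℝ) (hσ : 0 < σ)
    (εμ x₀ : Fin d → ℝ)
    (α : ℕ → ℝ) (hα : ∀ s, 1 ≤ s → α s ∈ Set.Ioo (0 : ℝ) 1)
    (abar : ℕ → ℝ) (habar : ∀ t, abar t = ∏ s ∈ Finset.Icc 1 t, (α s) ^ 2)
    (E : ℕ → Ω → (Fin d → ℝ))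
    (hEmeas : ∀ s, Measurable (E s))
    (hEindep : iIndepFun E P)
    (hElaw : ∀ s, 1 ≤ s →
      Measure.map (E s) P = Measure.pi (fun _ : Fin d => gaussianReal 0 (σ ^ 2).toNNReal))
    (X : ℕ → Ω → (Fin d → ℝ))
    (hX0 : ∀ ω, X 0 ω = x₀)
    (hXrec : ∀ t ω i, X (t + 1) ω i =
      α (t + 1) * X t ω i + (1 - α (t + 1)) * εμ i
        + Real.sqrt (1 - (α (t + 1)) ^ 2) * E (t + 1) ω i) :
    ∀ t, 1 ≤ t →
      Measure.map (X t) P = Measure.pi (fun i : Fin d =>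
        gaussianReal (Real.sqrt (abar t) * x₀ i + (1 - Real.sqrt (abar t)) * εμ i)
          ((1 - abar t) * σ ^ 2).toNNReal) := by
  -- measurability of X t
  have hXmeas : ∀ t, Measurable (X t) := by
    intro t
    induction t with
    | zero =>
      rw [show X 0 = fun _ => x₀ from funext hX0]
      exact measurable_const
    | succ t ih =>
      rw [show X (t + 1) = fun ω i => α (t + 1) * X t ω i + (1 - α (t + 1)) * εμ i
          + Real.sqrt (1 - (α (t + 1)) ^ 2) * E (t + 1) ω i from
        funext fun ω => funext fun i => hXrec t ω i]
      refine measurable_pi_lambda _ fun i => ?_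
      exact ((((measurable_pi_apply i).comp ih).const_mul _).add_const _).add
        (((measurable_pi_apply i).comp (hEmeas (t + 1))).const_mul _)
  -- X t is a measurable function of E 0, ..., E t
  have hfun : ∀ t, ∃ g : (((Finset.range (t + 1) : Finset ℕ)) → (Fin d → ℝ)) → (Fin d → ℝ),
      Measurable g ∧ ∀ ω, X t ω = g (fun s => E s.1 ω) := by
    intro t
    induction t with
    | zero => exact ⟨fun _ => x₀, measurable_const, fun ω => hX0 ω⟩
    | succ t ih =>
      obtain ⟨g, hgm, hg⟩ := ih
      have hmem : ∀ s : ((Finset.range (t + 1) : Finset ℕ)), s.1 ∈ Finset.range (t + 2) := by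
        intro s
        have := Finset.mem_range.mp s.2
        exact Finset.mem_range.mpr (by omega)
      refine ⟨fun v i => α (t + 1) * g (fun s => v ⟨s.1, hmem s⟩) i + (1 - α (t + 1)) * εμ i
        + Real.sqrt (1 - (α (t + 1)) ^ 2) * v ⟨t + 1, Finset.mem_range.mpr (by omega)⟩ i,
        ?_, ?_⟩
      · have hres : Measurable (fun (v : ((Finset.range (t + 2) : Finset ℕ)) → Fin d → ℝ)
            (s : ((Finset.range (t + 1) : Finset ℕ))) => v ⟨s.1, hmem s⟩) :=
          measurable_pi_lambda _ fun s => measurable_pi_apply _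
        refine measurable_pi_lambda _ fun i => ?_
        have h1 : Measurable fun (v : ((Finset.range (t + 2) : Finset ℕ)) → Fin d → ℝ) =>
            g (fun s => v ⟨s.1, hmem s⟩) i := (measurable_pi_apply i).comp (hgm.comp hres)
        have h2 : Measurable fun (v : ((Finset.range (t + 2) : Finset ℕ)) → Fin d → ℝ) =>
            v ⟨t + 1, Finset.mem_range.mpr (by omega)⟩ i :=
          (measurable_pi_apply i).comp (measurable_pi_apply _)
        exact ((h1.const_mul _).add_const _).add (h2.const_mul _)
      · intro ω
        funext i
        rw [hXrec t ω i, hg ω]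
  -- independence of X t and E (t+1)
  have hindep : ∀ t, IndepFun (X t) (E (t + 1)) P := by
    intro t
    obtain ⟨g, hgm, hg⟩ := hfun t
    have hdisj : Disjoint (Finset.range (t + 1)) ({t + 1} : Finset ℕ) := by
      simp only [Finset.disjoint_singleton_right, Finset.mem_range]
      omega
    have h := hEindep.indepFun_finset (Finset.range (t + 1)) {t + 1} hdisj hEmeas
    have h2 := h.comp hgm
      (measurable_pi_apply (⟨t + 1, Finset.mem_singleton_self (t + 1)⟩ : (({t + 1} : Finset ℕ))))
    rw [show X t = g ∘ (fun a (i : ((Finset.range (t + 1) : Finset ℕ))) => E i.1 a) from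
      funext hg]
    exact h2
  -- the key claim, for all t
  have key : ∀ t, Measure.map (X t) P = Measure.pi (fun i : Fin d =>
      gaussianReal (Real.sqrt (abar t) * x₀ i + (1 - Real.sqrt (abar t)) * εμ i)
        ((1 - abar t) * σ ^ 2).toNNReal) := by
    intro t
    induction t with
    | zero =>
      have h0 : abar 0 = 1 := by rw [habar]; simp
      rw [show X 0 = fun _ => x₀ from funext hX0, Measure.map_const, measure_univ, one_smul, h0,
        ← my_pi_dirac x₀]
      congr 1
      funext i
      rw [show (1 - (1:ℝ)) * σ ^ 2 = 0 by ring]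
      simp [gaussianReal_zero_var]
    | succ t ih =>
      have haI := hα (t + 1) (by omega)
      have ha0 : 0 < α (t + 1) := haI.1
      have ha1 : α (t + 1) < 1 := haI.2
      have habar_nonneg : 0 ≤ abar t := by rw [habar]; positivity
      have habar_le_one : abar t ≤ 1 := by
        rw [habar]
        refine Finset.prod_le_one (fun s _ => by positivity) (fun s hs => ?_)
        have h := hα s (Finset.mem_Icc.mp hs).1
        nlinarith [h.1, h.2]
      have habar_succ : abar (t + 1) = abar t * (α (t + 1)) ^ 2 := by
        rw [habar, habar, Finset.prod_Icc_succ_top (Nat.le_add_left 1 t)]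
      have hb2 : Real.sqrt (1 - (α (t + 1)) ^ 2) ^ 2 = 1 - (α (t + 1)) ^ 2 :=
        Real.sq_sqrt (by nlinarith)
      have hsq : Real.sqrt (abar (t + 1)) = α (t + 1) * Real.sqrt (abar t) := by
        rw [habar_succ, mul_comm (abar t), Real.sqrt_mul (sq_nonneg _),
          Real.sqrt_sq ha0.le]
      have hXeq : X (t + 1) = fun ω i => α (t + 1) * X t ω i
          + (fun i => (1 - α (t + 1)) * εμ i) i
          + Real.sqrt (1 - (α (t + 1)) ^ 2) * E (t + 1) ω i :=
        funext fun ω => funext fun i => hXrec t ω i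
      rw [hXeq, map_affine_pi (α (t + 1)) (Real.sqrt (1 - (α (t + 1)) ^ 2))
        (fun i => (1 - α (t + 1)) * εμ i) _ _ _ (hXmeas t) (hEmeas (t + 1)) (hindep t)
        ih (hElaw (t + 1) (by omega))]
      have hvar : (⟨(α (t + 1)) ^ 2, sq_nonneg _⟩ * ((1 - abar t) * σ ^ 2).toNNReal
          + ⟨Real.sqrt (1 - (α (t + 1)) ^ 2) ^ 2, sq_nonneg _⟩ * (σ ^ 2).toNNReal : ℝ≥0)
          = ((1 - abar (t + 1)) * σ ^ 2).toNNReal := by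
        have h1 : (0:ℝ) ≤ 1 - abar t := by linarith
        have h2 : (0:ℝ) ≤ 1 - abar (t + 1) := by rw [habar_succ]; nlinarith
        apply NNReal.coe_injective
        simp only [NNReal.coe_add, NNReal.coe_mul, NNReal.coe_mk,
          Real.coe_toNNReal _ (by positivity : (0:ℝ) ≤ (1 - abar t) * σ ^ 2),
          Real.coe_toNNReal _ (by positivity : (0:ℝ) ≤ σ ^ 2),
          Real.coe_toNNReal _ (by positivity : (0:ℝ) ≤ (1 - abar (t + 1)) * σ ^ 2)]
        change α (t + 1) ^ 2 * (((1 - abar t) * σ ^ 2).toNNReal : ℝ)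
          + √(1 - α (t + 1) ^ 2) ^ 2 * ((σ ^ 2).toNNReal : ℝ) = _
        rw [Real.coe_toNNReal _ (mul_nonneg h1 (sq_nonneg σ)), Real.coe_toNNReal _ (sq_nonneg σ),
          hb2, habar_succ]
        ring
      rw [hvar]
      congr 1
      funext i
      rw [hsq]
      ring_nf
  exact fun t _ => key t
end

section
/- Let T ≥ 1, σ > 0, ε̂_μ ∈ ℝ, let (α_s)_{s=1}^T be reals in (0,1), ᾱ_s = ∏_{r=1}^s α_r² (with ᾱ_0 = 1), β̃_s = (1−α_s²)(1−ᾱ_{s−1})/(1−ᾱ_s), and let c₁,…,c_T ∈ ℝ be arbitrary drift terms. Let (Z_s)_{s=1}^T be independent real random variables with Z_s ~ N(0, β̃_s σ²). Define Y_T = ε̂_μ and Y_{t−1} = Y_t/α_t + c_t + Z_t for t = T, T−1, …, 1. Then for every t with 1 ≤ t ≤ T, the law of Y_{t−1} is the Gaussian N( √(ᾱ_{t−1}/ᾱ_T)·ε̂_μ + ∑_{s=t}^{T} √(ᾱ_{t−1}/ᾱ_{s−1})·c_s , ∑_{s=t}^{T} (ᾱ_{t−1}/ᾱ_{s−1})·β̃_s·σ²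 ). -/
open MeasureTheory ProbabilityTheory Finset

open Real
open scoped NNReal ENNReal

namespace RayFlowAux


lemma pdf_mul_eq {v₁ v₂ : ℝ≥0} (h₁ : v₁ ≠ 0) (h₂ : v₂ ≠ 0) (m₁ m₂ u x : ℝ) :
    gaussianPDFReal m₁ v₁ x * gaussianPDFReal m₂ v₂ (u - x)
      = gaussianPDFReal (m₁ + m₂) (v₁ + v₂) u
        * gaussianPDFReal (m₁ + (v₁ : ℝ) * (u - m₁ - m₂) / ((v₁ : ℝ) + (v₂ : ℝ)))
            (v₁ * v₂ / (v₁ + v₂)) x := by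
  have ha : (0 : ℝ) < v₁ := lt_of_le_of_ne v₁.coe_nonneg (by exact_mod_cast (Ne.symm h₁))
  have hb : (0 : ℝ) < v₂ := lt_of_le_of_ne v₂.coe_nonneg (by exact_mod_cast (Ne.symm h₂))
  have hab : (0 : ℝ) < (v₁ : ℝ) + v₂ := by linarith
  have hw : ((v₁ * v₂ / (v₁ + v₂) : ℝ≥0) : ℝ) = (v₁ : ℝ) * v₂ / ((v₁ : ℝ) + v₂) := by
    push_cast; ring
  have hvv : ((v₁ + v₂ : ℝ≥0) : ℝ) = (v₁ : ℝ) + v₂ := by push_cast; ring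
  unfold gaussianPDFReal
  rw [hw, hvv, mul_mul_mul_comm, mul_mul_mul_comm ((√(2 * π * ((v₁:ℝ) + v₂)))⁻¹)]
  congr 1
  · rw [← mul_inv, ← mul_inv, ← Real.sqrt_mul (by positivity), ← Real.sqrt_mul (by positivity)]
    congr 1
    field_simp
  · rw [← Real.exp_add, ← Real.exp_add]
    congr 1
    field_simp
    ring

lemma integral_pdf_mul {v₁ v₂ : ℝ≥0} (h₁ : v₁ ≠ 0) (h₂ : v₂ ≠ 0) (m₁ m₂ u : ℝ) :
    ∫ x, gaussianPDFReal m₁ v₁ x * gaussianPDFReal m₂ v₂ (u - x)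
      = gaussianPDFReal (m₁ + m₂) (v₁ + v₂) u := by
  have hw : (v₁ * v₂ / (v₁ + v₂) : ℝ≥0) ≠ 0 :=
    div_ne_zero (mul_ne_zero h₁ h₂) (by simp [h₁])
  simp_rw [pdf_mul_eq h₁ h₂ m₁ m₂ u]
  rw [integral_const_mul, integral_gaussianPDFReal_eq_one _ hw, mul_one]

lemma integrable_pdf_mul {v₁ v₂ : ℝ≥0} (h₁ : v₁ ≠ 0) (h₂ : v₂ ≠ 0) (m₁ m₂ u : ℝ) :
    Integrable (fun x => gaussianPDFReal m₁ v₁ x * gaussianPDFReal m₂ v₂ (u - x)) := by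
  simp_rw [pdf_mul_eq h₁ h₂ m₁ m₂ u]
  exact (integrable_gaussianPDFReal _ _).const_mul _


lemma lintegral_pdf_mul {v₁ v₂ : ℝ≥0} (h₁ : v₁ ≠ 0) (h₂ : v₂ ≠ 0) (m₁ m₂ u : ℝ) :
    ∫⁻ x, gaussianPDF m₁ v₁ x * gaussianPDF m₂ v₂ (u - x)
      = gaussianPDF (m₁ + m₂) (v₁ + v₂) u := by
  unfold gaussianPDF
  simp_rw [← ENNReal.ofReal_mul (gaussianPDFReal_nonneg m₁ v₁ _)]
  rw [← ofReal_integral_eq_lintegral_ofReal (integrable_pdf_mul h₁ h₂ m₁ m₂ u)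
      (Filter.Eventually.of_forall fun x =>
        mul_nonneg (gaussianPDFReal_nonneg _ _ _) (gaussianPDFReal_nonneg _ _ _)),
    integral_pdf_mul h₁ h₂]

lemma gaussianReal_conv (m₁ m₂ : ℝ) (v₁ v₂ : ℝ≥0) :
    Measure.map (fun p : ℝ × ℝ => p.1 + p.2)
        ((gaussianReal m₁ v₁).prod (gaussianReal m₂ v₂))
      = gaussianReal (m₁ + m₂) (v₁ + v₂) := by
  by_cases h₁ : v₁ = 0
  · subst h₁
    rw [gaussianReal_zero_var, Measure.dirac_prod,
      Measure.map_map measurable_add (measurable_prodMk_left), zero_add]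
    have : (fun p : ℝ × ℝ => p.1 + p.2) ∘ (Prod.mk m₁) = (fun y => m₁ + y) := rfl
    rw [this, gaussianReal_map_const_add, add_comm]
  by_cases h₂ : v₂ = 0
  · subst h₂
    rw [gaussianReal_zero_var, Measure.prod_dirac,
      Measure.map_map measurable_add (measurable_prodMk_right), add_zero]
    have : (fun p : ℝ × ℝ => p.1 + p.2) ∘ (fun x => (x, m₂)) = (fun x => x + m₂) := rfl
    rw [this, gaussianReal_map_add_const]
  -- both nonzero
  ext s hs
  rw [Measure.map_apply measurable_add hs,
    Measure.prod_apply (measurable_add hs)]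
  have hinner : ∀ x : ℝ, (gaussianReal m₂ v₂) (Prod.mk x ⁻¹' ((fun p : ℝ × ℝ => p.1 + p.2) ⁻¹' s))
      = ∫⁻ u in s, gaussianPDF m₂ v₂ (u - x) := by
    intro x
    have hpre : (Prod.mk x ⁻¹' ((fun p : ℝ × ℝ => p.1 + p.2) ⁻¹' s)) = (fun y => x + y) ⁻¹' s := rfl
    rw [hpre, ← Measure.map_apply (measurable_const_add x) hs, gaussianReal_map_const_add,
      gaussianReal_apply _ h₂]
    congr 1
    ext u
    unfold gaussianPDF
    rw [gaussianPDFReal_sub, add_comm m₂ x]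
  simp_rw [hinner]
  have hmeas2 : Measurable (fun q : ℝ × ℝ => gaussianPDF m₂ v₂ (q.2 - q.1)) :=
    (measurable_gaussianPDF m₂ v₂).comp (measurable_snd.sub measurable_fst)
  have hmeasg : Measurable (fun x : ℝ => ∫⁻ u in s, gaussianPDF m₂ v₂ (u - x)) := by
    exact Measurable.lintegral_prod_right hmeas2
  rw [gaussianReal_of_var_ne_zero _ h₁,
    lintegral_withDensity_eq_lintegral_mul _ (measurable_gaussianPDF m₁ v₁) hmeasg]
  have hps : ∀ x : ℝ, (gaussianPDF m₁ v₁ * fun x => ∫⁻ u in s, gaussianPDF m₂ v₂ (u - x)) x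
      = ∫⁻ u in s, gaussianPDF m₁ v₁ x * gaussianPDF m₂ v₂ (u - x) := by
    intro x
    simp only [Pi.mul_apply]
    rw [lintegral_const_mul]
    exact (measurable_gaussianPDF m₂ v₂).comp (measurable_id'.sub_const x)
  simp_rw [hps]
  rw [lintegral_lintegral_swap]
  · have hin : ∀ u : ℝ, ∫⁻ x, gaussianPDF m₁ v₁ x * gaussianPDF m₂ v₂ (u - x)
        = gaussianPDF (m₁ + m₂) (v₁ + v₂) u := fun u => lintegral_pdf_mul h₁ h₂ m₁ m₂ u
    simp_rw [hin]
    rw [← gaussianReal_apply _ (by simp [h₁]) s]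
  · apply Measurable.aemeasurable
    exact ((measurable_gaussianPDF m₁ v₁).comp measurable_fst).mul
      ((measurable_gaussianPDF m₂ v₂).comp (measurable_snd.sub measurable_fst))


lemma indepFun_gaussian_add {Ω : Type*} [MeasurableSpace Ω] {P : Measure Ω}
    [IsProbabilityMeasure P] {X Y : Ω → ℝ} (hX : Measurable X) (hY : Measurable Y)
    (h : IndepFun X Y P) {m₁ m₂ : ℝ} {v₁ v₂ : ℝ≥0}
    (h₁ : P.map X = gaussianReal m₁ v₁) (h₂ : P.map Y = gaussianReal m₂ v₂) :
    P.map (fun ω => X ω + Y ω) = gaussianReal (m₁ + m₂) (v₁ + v₂) := by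
  have hmap := (indepFun_iff_map_prod_eq_prod_map_map hX.aemeasurable hY.aemeasurable).mp h
  have hc : (fun ω => X ω + Y ω)
      = (fun p : ℝ × ℝ => p.1 + p.2) ∘ (fun ω => (X ω, Y ω)) := rfl
  rw [hc, ← Measure.map_map measurable_add (hX.prodMk hY), hmap, h₁, h₂, gaussianReal_conv]

lemma iIndepFun_gaussian_sum {Ω : Type*} [MeasurableSpace Ω] {P : Measure Ω}
    [IsProbabilityMeasure P] {W : ℕ → Ω → ℝ} (hmeas : ∀ i, Measurable (W i))
    (hindep : iIndepFun W P) (m : ℕ → ℝ) (v : ℕ → ℝ≥0)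
    (S : Finset ℕ) (hlaw : ∀ i ∈ S, P.map (W i) = gaussianReal (m i) (v i)) :
    P.map (fun ω => ∑ i ∈ S, W i ω) = gaussianReal (∑ i ∈ S, m i) (∑ i ∈ S, v i) := by
  classical
  induction S using Finset.induction_on with
  | empty =>
      simp only [Finset.sum_empty]
      rw [Measure.map_const, measure_univ, one_smul, ← gaussianReal_zero_var]
  | insert a S' hi ih =>
      have hlaw' : ∀ i ∈ S', P.map (W i) = gaussianReal (m i) (v i) :=
        fun i hi' => hlaw i (Finset.mem_insert_of_mem hi')
      have hsum_meas : Measurable (fun ω => ∑ i ∈ S', W i ω) := by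
        exact Finset.measurable_sum S' (fun i _ => hmeas i)
      have hIF : IndepFun (W a) (fun ω => ∑ i ∈ S', W i ω) P := by
        have := (hindep.indepFun_finsetSum_of_notMem hmeas hi).symm
        have he : (∑ i ∈ S', W i) = fun ω => ∑ i ∈ S', W i ω := by
          funext ω; simp [Finset.sum_apply]
        rwa [he] at this
      have := indepFun_gaussian_add (hmeas a) hsum_meas hIF
        (hlaw a (Finset.mem_insert_self a S')) (ih hlaw')
      simp only [Finset.sum_insert hi]
      exact this


end RayFlowAux

open RayFlowAux

/-- **General-term backward marginal of the RayFlow process (Proposition 2).**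
For the backward chain `Y_{t-1} = Y_t/α_t + c_t + Z_t` started at `Y_T = ε̂_μ`, with
independent `Z_s ~ N(0, β̃_s σ²)`, the law of `Y_{t-1}` is
`N(√(ᾱ_{t-1}/ᾱ_T) ε̂_μ + ∑_{s=t}^T √(ᾱ_{t-1}/ᾱ_{s-1}) c_s,
∑_{s=t}^T (ᾱ_{t-1}/ᾱ_{s-1}) β̃_s σ²)`. -/
theorem rayflow_backward_marginal_general
    {Ω : Type*} [MeasurableSpace Ω] (P : Measure Ω) [IsProbabilityMeasure P]
    (T : ℕ) (hT : 1 ≤ T) (σ : ℝ) (hσ : 0 < σ) (εhatμ : ℝ)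
    (α : ℕ → ℝ) (hα : ∀ s, 1 ≤ s → s ≤ T → α s ∈ Set.Ioo (0 : ℝ) 1)
    (abar : ℕ → ℝ) (habar : ∀ s, abar s = ∏ r ∈ Finset.Icc 1 s, (α r) ^ 2)
    (βt : ℕ → ℝ)
    (hβt : ∀ s, βt s = (1 - (α s) ^ 2) * (1 - abar (s - 1)) / (1 - abar s))
    (c : ℕ → ℝ)
    (Z : ℕ → Ω → ℝ) (hZmeas : ∀ s, Measurable (Z s))
    (hZindep : iIndepFun Z P)
    (hZlaw : ∀ s, 1 ≤ s → s ≤ T →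
      Measure.map (Z s) P = gaussianReal 0 (βt s * σ ^ 2).toNNReal)
    (Y : ℕ → Ω → ℝ)
    (hYT : ∀ ω, Y T ω = εhatμ)
    (hYrec : ∀ t, 1 ≤ t → t ≤ T → ∀ ω,
      Y (t - 1) ω = Y t ω / α t + c t + Z t ω) :
    ∀ t, 1 ≤ t → t ≤ T →
      Measure.map (Y (t - 1)) P
        = gaussianReal
            (Real.sqrt (abar (t - 1) / abar T) * εhatμ
              + ∑ s ∈ Finset.Icc t T, Real.sqrt (abar (t - 1) / abar (s - 1)) * c s)
            (∑ s ∈ Finset.Icc t T, abar (t - 1) / abar (s - 1) * βt s * σ ^ 2).toNNReal := by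
  -- positivity of abar
  have habar_pos : ∀ k, k ≤ T → 0 < abar k := by
    intro k hk
    rw [habar]
    exact Finset.prod_pos fun r hr =>
      pow_pos (hα r (Finset.mem_Icc.mp hr).1 ((Finset.mem_Icc.mp hr).2.trans hk)).1 2
  have habar_le_one : ∀ k, k ≤ T → abar k ≤ 1 := by
    intro k hk
    rw [habar]
    refine Finset.prod_le_one (fun r _ => sq_nonneg _) fun r hr => ?_
    have h := hα r (Finset.mem_Icc.mp hr).1 ((Finset.mem_Icc.mp hr).2.trans hk)
    nlinarith [h.1, h.2]
  have habar_succ : ∀ s, 1 ≤ s → abar s = abar (s - 1) * α s ^ 2 := by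
    intro s hs
    obtain ⟨n, rfl⟩ := Nat.exists_eq_add_of_le hs
    simp only [Nat.add_sub_cancel_left, habar]
    rw [add_comm 1 n, Finset.prod_Icc_succ_top (Nat.le_add_left 1 n)]
  have habar_lt_one : ∀ s, 1 ≤ s → s ≤ T → abar s < 1 := by
    intro s hs hsT
    rw [habar_succ s hs]
    have h1 : abar (s - 1) ≤ 1 := habar_le_one _ (by omega)
    have h2 := hα s hs hsT
    have h3 : 0 < abar (s - 1) := habar_pos _ (by omega)
    nlinarith [h2.1, h2.2]
  have hβt_nonneg : ∀ s, 1 ≤ s → s ≤ T → 0 ≤ βt s := by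
    intro s hs hsT
    rw [hβt]
    have h2 := hα s hs hsT
    have h1 : abar (s - 1) ≤ 1 := habar_le_one _ (by omega)
    have h3 : abar s < 1 := habar_lt_one s hs hsT
    apply div_nonneg
    · exact mul_nonneg (by nlinarith [h2.1, h2.2]) (by linarith)
    · linarith
  -- division step for sqrt coefficients
  have hdiv : ∀ t, 1 ≤ t → t ≤ T → ∀ x : ℝ, 0 < x →
      Real.sqrt (abar t / x) / α t = Real.sqrt (abar (t - 1) / x) := by
    intro t ht htT x hx
    have hα' := hα t ht htT
    have h1 : abar t / x = (abar (t - 1) / x) * α t ^ 2 := by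
      rw [habar_succ t ht]; ring
    rw [h1, Real.sqrt_mul (div_nonneg (habar_pos _ (by omega)).le hx.le),
      Real.sqrt_sq hα'.1.le, mul_div_cancel_right₀ _ hα'.1.ne']
  -- explicit representation of Y (t-1)
  have hrep : ∀ n t, 1 ≤ t → t ≤ T → T - t = n → ∀ ω,
      Y (t - 1) ω = Real.sqrt (abar (t - 1) / abar T) * εhatμ
        + (∑ s ∈ Finset.Icc t T, Real.sqrt (abar (t - 1) / abar (s - 1)) * c s)
        + (∑ s ∈ Finset.Icc t T, Real.sqrt (abar (t - 1) / abar (s - 1)) * Z s ω) := by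
    intro n
    induction n with
    | zero =>
        intro t ht1 htT hn ω
        have hteq : t = T := by omega
        subst hteq
        rw [hYrec t ht1 le_rfl ω, hYT ω]
        have h1 : Real.sqrt (abar (t - 1) / abar t) = 1 / α t := by
          rw [← hdiv t ht1 le_rfl (abar t) (habar_pos t le_rfl),
            div_self (habar_pos t le_rfl).ne', Real.sqrt_one]
        have h2 : abar (t - 1) / abar (t - 1) = 1 :=
          div_self (habar_pos (t - 1) (by omega)).ne'
        rw [Finset.Icc_self, Finset.sum_singleton, Finset.sum_singleton, h1, h2, Real.sqrt_one]
        ring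
    | succ n IH =>
        intro t ht1 htT hn ω
        have htT' : t < T := by omega
        have hYt := IH (t + 1) (by omega) (by omega) (by omega) ω
        simp only [Nat.add_sub_cancel] at hYt
        rw [hYrec t ht1 htT'.le ω, hYt]
        have hins : Finset.Icc t T = insert t (Finset.Icc (t + 1) T) := by
          ext x; simp only [Finset.mem_Icc, Finset.mem_insert]; omega
        have hnot : t ∉ Finset.Icc (t + 1) T := by simp
        have hA : Real.sqrt (abar t / abar T) * εhatμ / α t
            = Real.sqrt (abar (t - 1) / abar T) * εhatμ := by
          rw [mul_div_right_comm, hdiv t ht1 htT'.le _ (habar_pos T le_rfl)]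
        have hsum_c : (∑ s ∈ Finset.Icc (t + 1) T, Real.sqrt (abar t / abar (s - 1)) * c s) / α t
            = ∑ s ∈ Finset.Icc (t + 1) T, Real.sqrt (abar (t - 1) / abar (s - 1)) * c s := by
          rw [Finset.sum_div]
          refine Finset.sum_congr rfl fun s hs => ?_
          have hsmem := Finset.mem_Icc.mp hs
          rw [mul_div_right_comm, hdiv t ht1 htT'.le _ (habar_pos (s - 1) (by omega))]
        have hsum_Z : (∑ s ∈ Finset.Icc (t + 1) T,
              Real.sqrt (abar t / abar (s - 1)) * Z s ω) / α t
            = ∑ s ∈ Finset.Icc (t + 1) T, Real.sqrt (abar (t - 1) / abar (s - 1)) * Z s ω := by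
          rw [Finset.sum_div]
          refine Finset.sum_congr rfl fun s hs => ?_
          have hsmem := Finset.mem_Icc.mp hs
          rw [mul_div_right_comm, hdiv t ht1 htT'.le _ (habar_pos (s - 1) (by omega))]
        have h2 : abar (t - 1) / abar (t - 1) = 1 :=
          div_self (habar_pos (t - 1) (by omega)).ne'
        rw [hins, Finset.sum_insert hnot, Finset.sum_insert hnot, add_div, add_div,
          hA, hsum_c, hsum_Z, h2, Real.sqrt_one]
        ring
  -- now compute the law
  intro t ht1 htT
  set k : ℕ → ℝ := fun s => Real.sqrt (abar (t - 1) / abar (s - 1)) with hk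
  have hYeq : Y (t - 1) = fun ω =>
      (Real.sqrt (abar (t - 1) / abar T) * εhatμ
        + ∑ s ∈ Finset.Icc t T, k s * c s)
      + ∑ s ∈ Finset.Icc t T, (fun s ω => k s * Z s ω) s ω := by
    funext ω
    rw [hrep (T - t) t ht1 htT rfl ω, add_assoc]
  have hWmeas : ∀ s, Measurable (fun ω => k s * Z s ω) :=
    fun s => (hZmeas s).const_mul (k s)
  have hWindep : iIndepFun (fun s ω => k s * Z s ω) P := by
    have := hZindep.comp (fun s x => k s * x) (fun s => measurable_id.const_mul (k s))
    exact this
  have hWlaw : ∀ s ∈ Finset.Icc t T, P.map (fun ω => k s * Z s ω)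
      = gaussianReal ((fun _ => (0 : ℝ)) s)
        ((fun s => (abar (t - 1) / abar (s - 1) * βt s * σ ^ 2).toNNReal) s) := by
    intro s hs
    have hsmem := Finset.mem_Icc.mp hs
    have hmul : Measurable fun x : ℝ => k s * x := measurable_id.const_mul _
    have hmap : P.map (fun ω => k s * Z s ω)
        = (P.map (Z s)).map (fun x => k s * x) :=
      (Measure.map_map hmul (hZmeas s)).symm
    rw [hmap, hZlaw s (by omega) hsmem.2,
      gaussianReal_map_const_mul (μ := 0) (v := (βt s * σ ^ 2).toNNReal) (k s)]
    have hratio_nonneg : 0 ≤ abar (t - 1) / abar (s - 1) :=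
      div_nonneg (habar_pos _ (by omega)).le (habar_pos (s - 1) (by omega)).le
    have hk2 : k s ^ 2 = abar (t - 1) / abar (s - 1) := Real.sq_sqrt hratio_nonneg
    have hβσ : (0 : ℝ) ≤ βt s * σ ^ 2 :=
      mul_nonneg (hβt_nonneg s (by omega) hsmem.2) (sq_nonneg σ)
    congr 1
    · simp
    · apply NNReal.coe_injective
      beta_reduce
      have h1 : abar (t - 1) / abar (s - 1) * βt s * σ ^ 2
          = (abar (t - 1) / abar (s - 1)) * (βt s * σ ^ 2) := by ring
      rw [NNReal.coe_mul, h1, Real.coe_toNNReal _ (mul_nonneg hratio_nonneg hβσ),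
        Real.coe_toNNReal _ hβσ]
      rw [NNReal.coe_mk, hk2]
  have hsum := iIndepFun_gaussian_sum hWmeas hWindep (fun _ => (0 : ℝ))
    (fun s => (abar (t - 1) / abar (s - 1) * βt s * σ ^ 2).toNNReal)
    (Finset.Icc t T) hWlaw
  simp only [Finset.sum_const, smul_zero] at hsum
  -- add the constant
  have hsum_meas : Measurable (fun ω => ∑ s ∈ Finset.Icc t T, k s * Z s ω) :=
    Finset.measurable_sum _ fun s _ => hWmeas s
  have hfinal : P.map (Y (t - 1))
      = gaussianReal
          ((Real.sqrt (abar (t - 1) / abar T) * εhatμ + ∑ s ∈ Finset.Icc t T, k s * c s) + 0)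
          (∑ s ∈ Finset.Icc t T, (abar (t - 1) / abar (s - 1) * βt s * σ ^ 2).toNNReal) := by
    rw [hYeq]
    set C := Real.sqrt (abar (t - 1) / abar T) * εhatμ + ∑ s ∈ Finset.Icc t T, k s * c s with hC
    have hcomp : (fun ω => C + ∑ s ∈ Finset.Icc t T, k s * Z s ω)
        = (fun x => C + x) ∘ (fun ω => ∑ s ∈ Finset.Icc t T, k s * Z s ω) := rfl
    rw [hcomp, ← Measure.map_map (measurable_const_add C) hsum_meas, hsum,
      gaussianReal_map_const_add, add_comm 0 C]
  rw [hfinal, add_zero]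
  have hvs : (∑ s ∈ Finset.Icc t T, abar (t - 1) / abar (s - 1) * βt s * σ ^ 2).toNNReal
      = ∑ s ∈ Finset.Icc t T, (abar (t - 1) / abar (s - 1) * βt s * σ ^ 2).toNNReal := by
    apply Real.toNNReal_sum_of_nonneg
    intro s hs
    have hsmem := Finset.mem_Icc.mp hs
    have hratio_nonneg : 0 ≤ abar (t - 1) / abar (s - 1) :=
      div_nonneg (habar_pos _ (by omega)).le (habar_pos (s - 1) (by omega)).le
    have := hβt_nonneg s (by omega) hsmem.2
    positivity
  rw [hvs]
end

section
/- Let T ≥ 1, σ > 0, x̂₀, ε_μ ∈ ℝ, let (α_s)_{s=1}^T be reals in (0,1), ᾱ_s = ∏_{r=1}^s α_r² (with ᾱ_0 = 1), and β̃_s = (1−α_s²)(1−ᾱ_{s−1})/(1−ᾱ_s). Set the optimal terminal point ε̂*_μ = √ᾱ_T·x̂₀ + (1−√ᾱ_T)·ε_μ. Let (Z_s)_{s=1}^T be independent real random variables with Z_s ~ N(0, β̃_s σ²), and define Y_T = ε̂*_μ and Y_{t−1} = Y_t/α_t − ((1−α_t)/α_t)·ε_μ + Z_t for t = T, …, 1.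 Then the law of Y_0 is the Gaussian N( x̂₀ , V·σ² ) with V = ∑_{s=1}^{T} β̃_s/ᾱ_{s−1}; in particular the mean of Y_0 equals x̂₀ exactly, for every value of ε_μ. -/
open MeasureTheory ProbabilityTheory Finset

open Real
open scoped ENNReal NNReal Real


lemma gaussianPDFReal_conv (m1 m2 : ℝ) (v1 v2 : ℝ≥0) (h1 : v1 ≠ 0) (h2 : v2 ≠ 0) (z : ℝ) :
    ∫ y : ℝ, gaussianPDFReal m1 v1 (z - y) * gaussianPDFReal m2 v2 y
      = gaussianPDFReal (m1 + m2) (v1 + v2) z := by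
  have hw1 : (0:ℝ) < (v1:ℝ) := by positivity
  have hw2 : (0:ℝ) < (v2:ℝ) := by positivity
  set w1 : ℝ := (v1:ℝ) with hw1d
  set w2 : ℝ := (v2:ℝ) with hw2d
  have hA : (0:ℝ) < w1 + w2 := by linarith
  have hb : (0:ℝ) < (w1 + w2) / (2 * w1 * w2) := by positivity
  have key : ∀ y : ℝ, gaussianPDFReal m1 v1 (z - y) * gaussianPDFReal m2 v2 y
      = ((√(2*π*w1))⁻¹ * (√(2*π*w2))⁻¹ * rexp (-(z - m1 - m2)^2 / (2*(w1+w2))))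
        * rexp (-((w1+w2)/(2*w1*w2)) * (y - (m2 + (z - m1 - m2)*w2/(w1+w2)))^2) := by
    intro y
    simp only [gaussianPDFReal, ← hw1d, ← hw2d]
    rw [mul_mul_mul_comm, ← Real.exp_add, mul_assoc ((√(2*π*w1))⁻¹ * (√(2*π*w2))⁻¹),
      ← Real.exp_add]
    congr 1
    rw [Real.exp_eq_exp]
    have h1' : w1 ≠ 0 := ne_of_gt hw1
    have h2' : w2 ≠ 0 := ne_of_gt hw2
    have hA' : w1 + w2 ≠ 0 := ne_of_gt hA
    field_simp
    ring
  simp only [key, MeasureTheory.integral_const_mul]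
  rw [show (fun y : ℝ => rexp (-((w1+w2)/(2*w1*w2)) * (y - (m2 + (z - m1 - m2)*w2/(w1+w2)))^2))
        = (fun y : ℝ => (fun x : ℝ => rexp (-((w1+w2)/(2*w1*w2)) * x^2)) (y - (m2 + (z - m1 - m2)*w2/(w1+w2)))) from rfl]
  rw [integral_sub_right_eq_self (μ := volume)
      (fun x : ℝ => rexp (-((w1+w2)/(2*w1*w2)) * x^2)) (m2 + (z - m1 - m2)*w2/(w1+w2))]
  rw [integral_gaussian]
  have h1' : w1 ≠ 0 := ne_of_gt hw1
  have h2' : w2 ≠ 0 := ne_of_gt hw2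
  have hA' : w1 + w2 ≠ 0 := ne_of_gt hA
  have hcoe : ((v1 + v2 : ℝ≥0) : ℝ) = w1 + w2 := by push_cast; rw [← hw1d, ← hw2d]
  simp only [gaussianPDFReal, hcoe]
  rw [show z - (m1 + m2) = z - m1 - m2 by ring]
  have hconst : (√(2*π*w1))⁻¹ * (√(2*π*w2))⁻¹ * √(π / ((w1+w2)/(2*w1*w2)))
      = (√(2*π*(w1+w2)))⁻¹ := by
    rw [← Real.sqrt_inv (2*π*w1), ← Real.sqrt_inv (2*π*w2), ← Real.sqrt_inv (2*π*(w1+w2)),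
      ← Real.sqrt_mul (by positivity), ← Real.sqrt_mul (by positivity)]
    congr 1
    field_simp
  calc (√(2*π*w1))⁻¹ * (√(2*π*w2))⁻¹ * rexp (-(z - m1 - m2)^2 / (2*(w1+w2)))
        * √(π / ((w1+w2)/(2*w1*w2)))
      = ((√(2*π*w1))⁻¹ * (√(2*π*w2))⁻¹ * √(π / ((w1+w2)/(2*w1*w2))))
        * rexp (-(z - m1 - m2)^2 / (2*(w1+w2))) := by ring
    _ = (√(2*π*(w1+w2)))⁻¹ * rexp (-(z - m1 - m2)^2 / (2*(w1+w2))) := by rw [hconst]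
lemma integrable_gauss_conv (m1 m2 : ℝ) (v1 v2 : ℝ≥0) (z : ℝ) :
    Integrable (fun y : ℝ => gaussianPDFReal m1 v1 (z - y) * gaussianPDFReal m2 v2 y) := by
  refine Integrable.bdd_mul (integrable_gaussianPDFReal m2 v2)
    ((measurable_gaussianPDFReal m1 v1).comp (measurable_const.sub measurable_id)).aestronglyMeasurable
    (c := (√(2*π*v1))⁻¹) (ae_of_all _ fun y => ?_)
  rw [Real.norm_eq_abs, abs_of_nonneg (gaussianPDFReal_nonneg _ _ _)]
  simp only [gaussianPDFReal]
  calc (√(2*π*v1))⁻¹ * rexp (-(z - y - m1)^2 / (2*v1))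
      ≤ (√(2*π*v1))⁻¹ * 1 := by
        have : rexp (-(z - y - m1)^2 / (2*(v1:ℝ))) ≤ 1 :=
          Real.exp_le_one_iff.mpr
            (div_nonpos_of_nonpos_of_nonneg (neg_nonpos.mpr (sq_nonneg _)) (by positivity))
        exact mul_le_mul_of_nonneg_left this (by positivity)
    _ = (√(2*π*v1))⁻¹ := mul_one _

lemma lintegral_gaussianPDF_conv_s10 (m1 m2 : ℝ) (v1 v2 : ℝ≥0) (h1 : v1 ≠ 0) (h2 : v2 ≠ 0) (z : ℝ) :
    ∫⁻ y : ℝ, gaussianPDF m1 v1 (z - y) * gaussianPDF m2 v2 y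
      = gaussianPDF (m1 + m2) (v1 + v2) z := by
  simp only [gaussianPDF]
  simp_rw [← ENNReal.ofReal_mul (gaussianPDFReal_nonneg m1 v1 _)]
  rw [← ofReal_integral_eq_lintegral_ofReal (integrable_gauss_conv m1 m2 v1 v2 z)
    (ae_of_all _ fun y => mul_nonneg (gaussianPDFReal_nonneg _ _ _) (gaussianPDFReal_nonneg _ _ _))]
  rw [gaussianPDFReal_conv m1 m2 v1 v2 h1 h2 z]

set_option maxHeartbeats 1000000 in
lemma gaussianReal_map_add_prod (m1 m2 : ℝ) (v1 v2 : ℝ≥0) :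
    Measure.map (fun p : ℝ × ℝ => p.1 + p.2) ((gaussianReal m1 v1).prod (gaussianReal m2 v2))
      = gaussianReal (m1 + m2) (v1 + v2) := by
  by_cases h1 : v1 = 0
  · subst h1
    rw [gaussianReal_zero_var, Measure.dirac_prod,
      Measure.map_map measurable_add measurable_prodMk_left]
    rw [show ((fun p : ℝ×ℝ => p.1 + p.2) ∘ (Prod.mk m1)) = (fun y => m1 + y) from rfl]
    rw [gaussianReal_map_const_add, add_comm m2 m1, zero_add]
  by_cases h2 : v2 = 0
  · subst h2
    rw [gaussianReal_zero_var, Measure.prod_dirac,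
      Measure.map_map measurable_add measurable_prodMk_right]
    rw [show ((fun p : ℝ×ℝ => p.1 + p.2) ∘ (fun x => (x, m2))) = (fun x => x + m2) from rfl]
    rw [gaussianReal_map_add_const, add_zero]
  have h12 : v1 + v2 ≠ 0 := by simp [h1]
  set f := gaussianPDF m1 v1 with hfd
  set g := gaussianPDF m2 v2 with hgd
  have hf : Measurable f := measurable_gaussianPDF m1 v1
  have hg : Measurable g := measurable_gaussianPDF m2 v2
  rw [gaussianReal_of_var_ne_zero m1 h1, gaussianReal_of_var_ne_zero m2 h2,
    gaussianReal_of_var_ne_zero _ h12]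
  ext s hs
  set I := s.indicator (fun _ => (1:ℝ≥0∞)) with hId
  have hind : Measurable I := measurable_const.indicator hs
  rw [Measure.map_apply measurable_add hs, Measure.prod_apply (measurable_add hs),
    withDensity_apply _ hs]
  have hiv : ∀ x : ℝ, (volume.withDensity g) (Prod.mk x ⁻¹' ((fun p : ℝ×ℝ => p.1+p.2) ⁻¹' s))
      = ∫⁻ y, I (x + y) * g y := by
    intro x
    have hms : MeasurableSet ((fun y => x + y) ⁻¹' s) :=
      hs.preimage (measurable_const.add measurable_id)
    rw [show (Prod.mk x ⁻¹' ((fun p : ℝ×ℝ => p.1+p.2) ⁻¹' s)) = (fun y => x + y) ⁻¹' s from rfl,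
      withDensity_apply _ hms, ← lintegral_indicator hms]
    congr 1
    ext y
    by_cases hxy : x + y ∈ s <;> simp [hId, Set.indicator, hxy]
  simp_rw [← hfd, ← hgd, hiv]
  have hm1 : ∀ x : ℝ, Measurable fun y : ℝ => I (x + y) * g y := fun x =>
    (hind.comp (measurable_const.add measurable_id)).mul hg
  have hm2 : Measurable fun x : ℝ => ∫⁻ y, I (x + y) * g y := by
    apply Measurable.lintegral_prod_right' (f := fun p : ℝ × ℝ => I (p.1 + p.2) * g p.2)
    exact (hind.comp measurable_add).mul (hg.comp measurable_snd)
  rw [lintegral_withDensity_eq_lintegral_mul volume hf hm2]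
  simp only [Pi.mul_apply]
  have humeas : Measurable fun p : ℝ × ℝ => f p.1 * (I (p.1 + p.2) * g p.2) :=
    (hf.comp measurable_fst).mul ((hind.comp measurable_add).mul (hg.comp measurable_snd))
  have humeas2 : Measurable fun p : ℝ × ℝ => f (p.2 - p.1) * (I p.2 * g p.1) :=
    (hf.comp (measurable_snd.sub measurable_fst)).mul
      ((hind.comp measurable_snd).mul (hg.comp measurable_fst))
  calc ∫⁻ x, f x * ∫⁻ y, I (x + y) * g y
      = ∫⁻ x, ∫⁻ y, f x * (I (x + y) * g y) := by
        refine lintegral_congr fun x => (lintegral_const_mul _ (hm1 x)).symm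
    _ = ∫⁻ y, ∫⁻ x, f x * (I (x + y) * g y) :=
        lintegral_lintegral_swap humeas.aemeasurable
    _ = ∫⁻ y, ∫⁻ z, f (z - y) * (I z * g y) := by
        refine lintegral_congr fun y => ?_
        have := lintegral_add_right_eq_self (μ := volume) (fun z => f (z - y) * (I z * g y)) y
        simpa [add_sub_cancel_right] using this
    _ = ∫⁻ z, ∫⁻ y, f (z - y) * (I z * g y) :=
        lintegral_lintegral_swap humeas2.aemeasurable
    _ = ∫⁻ z, I z * ∫⁻ y, f (z - y) * g y := by
        refine lintegral_congr fun z => ?_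
        rw [← lintegral_const_mul (I z) (show Measurable fun y : ℝ => f (z - y) * g y by fun_prop)]
        refine lintegral_congr fun y => by ring
    _ = ∫⁻ z, I z * gaussianPDF (m1+m2) (v1+v2) z := by
        refine lintegral_congr fun z => ?_
        rw [lintegral_gaussianPDF_conv_s10 m1 m2 v1 v2 h1 h2 z]
    _ = ∫⁻ z in s, gaussianPDF (m1+m2) (v1+v2) z := by
        rw [← lintegral_indicator hs]
        refine lintegral_congr fun z => ?_
        by_cases hz : z ∈ s <;> simp [hId, Set.indicator, hz]

lemma indepFun_map_add_gaussianReal {Ω : Type*} [MeasurableSpace Ω] {P : Measure Ω}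
    [IsProbabilityMeasure P] {X Y : Ω → ℝ} (h : IndepFun X Y P)
    (hX : Measurable X) (hY : Measurable Y)
    {m1 m2 : ℝ} {v1 v2 : ℝ≥0} (hL1 : Measure.map X P = gaussianReal m1 v1)
    (hL2 : Measure.map Y P = gaussianReal m2 v2) :
    Measure.map (fun ω => X ω + Y ω) P = gaussianReal (m1 + m2) (v1 + v2) := by
  have hp := (indepFun_iff_map_prod_eq_prod_map_map hX.aemeasurable hY.aemeasurable).mp h
  have hcomp : (fun ω => X ω + Y ω) = (fun p : ℝ×ℝ => p.1 + p.2) ∘ (fun ω => (X ω, Y ω)) := rfl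
  rw [hcomp, ← Measure.map_map measurable_add (hX.prodMk hY), hp, hL1, hL2,
    gaussianReal_map_add_prod]

lemma map_sum_gaussianReal {Ω ι : Type*} [MeasurableSpace Ω] {P : Measure Ω}
    [IsProbabilityMeasure P] (X : ι → Ω → ℝ) (hmeas : ∀ i, Measurable (X i))
    (hind : iIndepFun X P) (m : ι → ℝ) (v : ι → ℝ≥0)
    (s : Finset ι) (hlaw : ∀ i ∈ s, Measure.map (X i) P = gaussianReal (m i) (v i)) :
    Measure.map (fun ω => ∑ i ∈ s, X i ω) P
      = gaussianReal (∑ i ∈ s, m i) (∑ i ∈ s, v i) := by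
  classical
  induction s using Finset.induction_on with
  | empty =>
    simp only [sum_empty]
    rw [Measure.map_const, measure_univ, one_smul, gaussianReal_zero_var]
  | @insert i s hi ih =>
    have hIF : IndepFun (∑ j ∈ s, X j) (X i) P :=
      hind.indepFun_finsetSum_of_notMem hmeas hi
    have hsum_eq : (fun ω => ∑ j ∈ s, X j ω) = ∑ j ∈ s, X j := by
      funext ω; rw [Finset.sum_apply]
    have hmsum : Measurable fun ω => ∑ j ∈ s, X j ω :=
      Finset.measurable_sum s (fun j _ => hmeas j)
    have hIF' : IndepFun (X i) (fun ω => ∑ j ∈ s, X j ω) P := by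
      rw [hsum_eq]; exact hIF.symm
    have hrec := ih (fun j hj => hlaw j (Finset.mem_insert_of_mem hj))
    simp only [Finset.sum_insert hi]
    exact indepFun_map_add_gaussianReal hIF' (hmeas i) hmsum
      (hlaw i (Finset.mem_insert_self i s)) hrec

lemma map_const_mul_gaussianReal {Ω : Type*} [MeasurableSpace Ω] {P : Measure Ω}
    {X : Ω → ℝ} (hX : Measurable X) {m : ℝ} {v : ℝ≥0}
    (hL : Measure.map X P = gaussianReal m v) (c : ℝ) :
    Measure.map (fun ω => c * X ω) P = gaussianReal (c * m) (NNReal.mk (c^2) (sq_nonneg _) * v) := by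
  rw [show (fun ω => c * X ω) = (fun x => c * x) ∘ X from rfl,
    ← Measure.map_map (measurable_const_mul c) hX, hL, gaussianReal_map_const_mul]

lemma map_const_add_gaussianReal {Ω : Type*} [MeasurableSpace Ω] {P : Measure Ω}
    {X : Ω → ℝ} (hX : Measurable X) {m : ℝ} {v : ℝ≥0}
    (hL : Measure.map X P = gaussianReal m v) (y : ℝ) :
    Measure.map (fun ω => y + X ω) P = gaussianReal (m + y) v := by
  rw [show (fun ω => y + X ω) = (fun x => y + x) ∘ X from rfl,
    ← Measure.map_map (measurable_const_add y) hX, hL, gaussianReal_map_const_add]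

/-- **Exact reconstruction (Theorem 1 of RayFlow).** With the optimal terminal point
`ε̂*_μ = √ᾱ_T x̂₀ + (1-√ᾱ_T) ε_μ` and backward drifts `-((1-α_t)/α_t) ε_μ`, the
law of `Y_0` is the Gaussian `N(x̂₀, V σ²)` with `V = ∑_{s=1}^T β̃_s/ᾱ_{s-1}`:
the mean of `Y_0` equals `x̂₀` exactly, for every value of `ε_μ`. -/
theorem rayflow_exact_reconstruction
    {Ω : Type*} [MeasurableSpace Ω] (P : Measure Ω) [IsProbabilityMeasure P]
    (T : ℕ) (hT : 1 ≤ T) (σ : ℝ) (hσ : 0 < σ) (xhat₀ εμ : ℝ)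
    (α : ℕ → ℝ) (hα : ∀ s, 1 ≤ s → s ≤ T → α s ∈ Set.Ioo (0 : ℝ) 1)
    (abar : ℕ → ℝ) (habar : ∀ s, abar s = ∏ r ∈ Finset.Icc 1 s, (α r) ^ 2)
    (βt : ℕ → ℝ)
    (hβt : ∀ s, βt s = (1 - (α s) ^ 2) * (1 - abar (s - 1)) / (1 - abar s))
    (εhatμ : ℝ)
    (hεhatμ : εhatμ = Real.sqrt (abar T) * xhat₀ + (1 - Real.sqrt (abar T)) * εμ)
    (Z : ℕ → Ω → ℝ) (hZmeas : ∀ s, Measurable (Z s))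
    (hZindep : iIndepFun Z P)
    (hZlaw : ∀ s, 1 ≤ s → s ≤ T →
      Measure.map (Z s) P = gaussianReal 0 (βt s * σ ^ 2).toNNReal)
    (Y : ℕ → Ω → ℝ)
    (hYT : ∀ ω, Y T ω = εhatμ)
    (hYrec : ∀ t, 1 ≤ t → t ≤ T → ∀ ω,
      Y (t - 1) ω = Y t ω / α t - (1 - α t) / α t * εμ + Z t ω) :
    Measure.map (Y 0) P
      = gaussianReal xhat₀
          ((∑ s ∈ Finset.Icc 1 T, βt s / abar (s - 1)) * σ ^ 2).toNNReal := by
  -- the product of the `α r`, `r ≤ t`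
  set b : ℕ → ℝ := fun t => ∏ r ∈ Finset.Icc 1 t, α r with hbdef
  have hbpos : ∀ t, t ≤ T → 0 < b t := by
    intro t ht
    refine Finset.prod_pos fun r hr => ?_
    obtain ⟨hr1, hr2⟩ := Finset.mem_Icc.mp hr
    exact (hα r hr1 (le_trans hr2 ht)).1
  have habar_b : ∀ t, abar t = (b t)^2 := by
    intro t
    rw [habar, hbdef, ← Finset.prod_pow]
  have hb0 : b 0 = 1 := by simp [hbdef]
  have hbsucc : ∀ t, 1 ≤ t → b t = b (t-1) * α t := by
    intro t ht
    obtain ⟨u, rfl⟩ : ∃ u, t = u + 1 := ⟨t - 1, by omega⟩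
    simp only [hbdef, Nat.add_sub_cancel]
    rw [Finset.prod_Icc_succ_top (by omega : 1 ≤ u + 1)]
  -- explicit representation of Y by downward induction
  have hrep : ∀ k, k ≤ T → ∀ ω, Y (T - k) ω
      = b (T-k) * xhat₀ + (1 - b (T-k)) * εμ
        + ∑ s ∈ Finset.Icc (T-k+1) T, (b (T-k) / b (s-1)) * Z s ω := by
    intro k
    induction k with
    | zero =>
      intro _ ω
      simp only [Nat.sub_zero]
      rw [Finset.Icc_eq_empty (by omega), Finset.sum_empty, hYT ω, hεhatμ, habar_b,
        Real.sqrt_sq (hbpos T le_rfl).le]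
      ring
    | succ k ih =>
      intro hk ω
      have hkT : k ≤ T := by omega
      have hu1 : 1 ≤ T - k := by omega
      have huT : T - k ≤ T := by omega
      have htu : T - (k+1) = (T - k) - 1 := by omega
      set u := T - k with hu
      have e1 := hYrec u hu1 huT ω
      have e2 := ih hkT ω
      rw [htu, e1, e2]
      have hu11 : u - 1 + 1 = u := by omega
      rw [hu11]
      have hsplit : Finset.Icc u T = insert u (Finset.Icc (u+1) T) := by
        ext x
        simp only [Finset.mem_Icc, Finset.mem_insert]
        omega
      rw [hsplit, Finset.sum_insert (by simp only [Finset.mem_Icc]; omega)]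
      have hαu : α u ≠ 0 := ne_of_gt (hα u hu1 huT).1
      have hbu : b u = b (u-1) * α u := hbsucc u hu1
      have hbu1 : b (u-1) ≠ 0 := ne_of_gt (hbpos (u-1) (by omega))
      have hsum : (∑ s ∈ Finset.Icc (u+1) T, b u / b (s-1) * Z s ω) / α u
          = ∑ s ∈ Finset.Icc (u+1) T, b (u-1) / b (s-1) * Z s ω := by
        rw [Finset.sum_div]
        refine Finset.sum_congr rfl fun s hs => ?_
        have hs' := Finset.mem_Icc.mp hs
        have hbs : b (s-1) ≠ 0 := ne_of_gt (hbpos (s-1) (by omega))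
        rw [hbu]
        field_simp
      rw [add_div, add_div, hsum, hbu]
      field_simp
      ring
  -- the normalized noises
  set W : ℕ → Ω → ℝ := fun s ω => (b (s-1))⁻¹ * Z s ω with hWdef
  have hY0 : Y 0 = fun ω => xhat₀ + ∑ s ∈ Finset.Icc 1 T, W s ω := by
    funext ω
    have h := hrep T le_rfl ω
    simp only [Nat.sub_self, zero_add, hb0] at h
    rw [h]
    have : ∀ s ∈ Finset.Icc 1 T, (1:ℝ) / b (s-1) * Z s ω = W s ω := by
      intro s _
      rw [hWdef, one_div]
    rw [Finset.sum_congr rfl this]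
    ring
  have hWmeas : ∀ s, Measurable (W s) := fun s => (hZmeas s).const_mul _
  have hWindep : iIndepFun W P := by
    exact hZindep.comp (fun s (x:ℝ) => (b (s-1))⁻¹ * x) (fun s => measurable_const_mul _)
  -- nonnegativity facts
  have habar_le_one : ∀ t, t ≤ T → abar t ≤ 1 := by
    intro t ht
    rw [habar]
    refine Finset.prod_le_one (fun r _ => sq_nonneg _) fun r hr => ?_
    obtain ⟨hr1, hr2⟩ := Finset.mem_Icc.mp hr
    have h := hα r hr1 (le_trans hr2 ht)
    nlinarith [h.1, h.2]
  have habar_lt_one : ∀ s, 1 ≤ s → s ≤ T → abar s < 1 := by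
    intro s h1s hsT
    have hs' : abar s = abar (s-1) * (α s)^2 := by
      obtain ⟨u, rfl⟩ : ∃ u, s = u + 1 := ⟨s - 1, by omega⟩
      rw [habar, habar, Nat.add_sub_cancel, Finset.prod_Icc_succ_top (by omega : 1 ≤ u + 1)]
    have hαs := hα s h1s hsT
    have h1 : abar (s-1) ≤ 1 := habar_le_one (s-1) (by omega)
    have h2 : 0 < abar (s-1) := by
      rw [habar_b]; exact pow_pos (hbpos (s-1) (by omega)) 2
    nlinarith [hαs.1, hαs.2]
  have hβnonneg : ∀ s, 1 ≤ s → s ≤ T → 0 ≤ βt s := by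
    intro s h1s hsT
    rw [hβt]
    have hαs := hα s h1s hsT
    have h1 : abar (s-1) ≤ 1 := habar_le_one (s-1) (by omega)
    have h2 : abar s < 1 := habar_lt_one s h1s hsT
    apply div_nonneg
    · exact mul_nonneg (by nlinarith [hαs.1, hαs.2]) (by linarith)
    · linarith
  have hbpos' : ∀ s, 1 ≤ s → s ≤ T → 0 < b (s-1) := fun s h1 h2 => hbpos (s-1) (by omega)
  -- law of W s
  have hWlaw : ∀ s ∈ Finset.Icc 1 T, Measure.map (W s) P
      = gaussianReal 0 ((βt s / abar (s-1) * σ^2).toNNReal) := by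
    intro s hs
    obtain ⟨h1s, hsT⟩ := Finset.mem_Icc.mp hs
    have h := map_const_mul_gaussianReal (hZmeas s) (hZlaw s h1s hsT) ((b (s-1))⁻¹)
    rw [mul_zero] at h
    refine h.trans ?_
    have hβ := hβnonneg s h1s hsT
    have hab : 0 < abar (s-1) := by rw [habar_b]; exact pow_pos (hbpos' s h1s hsT) 2
    have h0 : 0 ≤ βt s * σ^2 := by positivity
    have h0' : 0 ≤ βt s / abar (s-1) * σ^2 := by positivity
    congr 1
    apply NNReal.coe_injective
    rw [NNReal.coe_mul, Real.coe_toNNReal _ h0, Real.coe_toNNReal _ h0', NNReal.coe_mk,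
      habar_b]
    field_simp
  -- conclude
  have hmap := map_sum_gaussianReal W hWmeas hWindep (fun _ => 0)
    (fun s => (βt s / abar (s-1) * σ^2).toNNReal) (Finset.Icc 1 T) hWlaw
  rw [hY0]
  have hfinal := map_const_add_gaussianReal
    (Finset.measurable_sum (Finset.Icc 1 T) (fun s _ => hWmeas s)) hmap xhat₀
  simp only [Finset.sum_const_zero, zero_add] at hfinal
  rw [hfinal]
  congr 1
  apply NNReal.coe_injective
  rw [NNReal.coe_sum]
  have hterm : ∀ s ∈ Finset.Icc 1 T,
      ((βt s / abar (s-1) * σ^2).toNNReal : ℝ) = βt s / abar (s-1) * σ^2 := by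
    intro s hs
    obtain ⟨h1s, hsT⟩ := Finset.mem_Icc.mp hs
    have hβ := hβnonneg s h1s hsT
    have hab : 0 < abar (s-1) := by rw [habar_b]; exact pow_pos (hbpos' s h1s hsT) 2
    exact Real.coe_toNNReal _ (by positivity)
  rw [Finset.sum_congr rfl hterm]
  have hsnn : 0 ≤ (∑ s ∈ Finset.Icc 1 T, βt s / abar (s - 1)) * σ ^ 2 := by
    apply mul_nonneg _ (sq_nonneg σ)
    refine Finset.sum_nonneg fun s hs => ?_
    obtain ⟨h1s, hsT⟩ := Finset.mem_Icc.mp hs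
    have hab : 0 < abar (s-1) := by rw [habar_b]; exact pow_pos (hbpos' s h1s hsT) 2
    exact div_nonneg (hβnonneg s h1s hsT) hab.le
  rw [Real.coe_toNNReal _ hsnn, Finset.sum_mul]
end

section
/- Let p, q : ℝ → (0,∞) be continuously differentiable probability densities (∫ p = ∫ q = 1). Suppose that for every continuously differentiable compactly supported function f : ℝ → ℝ one has ∫_ℝ p(x)·[ (q'(x)/q(x))·f(x) + f'(x) ] dx = 0. Then p = q. -/
open MeasureTheory Real

lemma integral_deriv_eq_zero_of_compactSupport {g : ℝ → ℝ}
    (hg : ContDiff ℝ 1 g) (h2g : HasCompactSupport g) :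
    ∫ x, deriv g x = 0 := by
  have hint : Integrable (deriv g) :=
    (hg.continuous_deriv le_rfl).integrable_of_hasCompactSupport h2g.deriv
  rw [← intervalIntegral.integral_Iic_add_Ioi (b := 0) hint.integrableOn hint.integrableOn,
    h2g.integral_Iic_deriv_eq hg 0, h2g.integral_Ioi_deriv_eq hg 0]
  ring

/-- **Stein identity ('only if' direction).** If `p, q` are positive `C¹`
probability densities on `ℝ` and the Stein operator expectation
`∫ p (s_q f + f')` vanishes for every compactly supported `C¹` test function `f`,
then `p = q`. -/
theorem eq_of_stein_identity
    (p q : ℝ → ℝ)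
    (hp : ContDiff ℝ 1 p) (hq : ContDiff ℝ 1 q)
    (hppos : ∀ x, 0 < p x) (hqpos : ∀ x, 0 < q x)
    (hpInt : ∫ x, p x = 1) (hqInt : ∫ x, q x = 1)
    (hstein : ∀ f : ℝ → ℝ, ContDiff ℝ 1 f → HasCompactSupport f →
      ∫ x, p x * (deriv q x / q x * f x + deriv f x) = 0) :
    p = q := by
  have hqne : ∀ x, q x ≠ 0 := fun x => (hqpos x).ne'
  have hpc : Continuous p := hp.continuous
  have hqc : Continuous q := hq.continuous
  have hp' : Continuous (deriv p) := hp.continuous_deriv le_rfl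
  have hq' : Continuous (deriv q) := hq.continuous_deriv le_rfl
  set G : ℝ → ℝ := fun x => p x * (deriv q x / q x) - deriv p x with hGdef
  have hGc : Continuous G := (hpc.mul (hq'.div hqc hqne)).sub hp'
  have key : ∀ f : ℝ → ℝ, ContDiff ℝ 1 f → HasCompactSupport f →
      ∫ x, f x * G x = 0 := by
    intro f hf hfsupp
    have hfc : Continuous f := hf.continuous
    have hf' : Continuous (deriv f) := hf.continuous_deriv le_rfl
    -- integration by parts: ∫ (p' f + p f') = 0
    have hpf : ContDiff ℝ 1 (fun x => p x * f x) := hp.mul hf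
    have hpfsupp : HasCompactSupport (fun x => p x * f x) := hfsupp.mul_left
    have hzero : ∫ x, deriv (fun y => p y * f y) x = 0 :=
      integral_deriv_eq_zero_of_compactSupport hpf hpfsupp
    have hderiv : (fun x => deriv (fun y => p y * f y) x)
        = fun x => deriv p x * f x + p x * deriv f x := by
      funext x
      exact deriv_fun_mul (hp.differentiable one_ne_zero x) (hf.differentiable one_ne_zero x)
    rw [hderiv] at hzero
    -- integrability of the pieces
    have i1 : Integrable (fun x => deriv p x * f x) :=
      (hp'.mul hfc).integrable_of_hasCompactSupport hfsupp.mul_left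
    have i2 : Integrable (fun x => p x * deriv f x) :=
      (hpc.mul hf').integrable_of_hasCompactSupport hfsupp.deriv.mul_left
    have i3 : Integrable (fun x => p x * (deriv q x / q x) * f x) :=
      ((hpc.mul (hq'.div hqc hqne)).mul hfc).integrable_of_hasCompactSupport hfsupp.mul_left
    have hsplit1 : (∫ x, deriv p x * f x) + ∫ x, p x * deriv f x = 0 := by
      rw [← integral_add i1 i2]; exact hzero
    have hstein' := hstein f hf hfsupp
    have hrw : (fun x => p x * (deriv q x / q x * f x + deriv f x))
        = fun x => p x * (deriv q x / q x) * f x + p x * deriv f x := by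
      funext x; ring
    rw [hrw] at hstein'
    have hsplit2 : (∫ x, p x * (deriv q x / q x) * f x) + ∫ x, p x * deriv f x = 0 := by
      rw [← integral_add i3 i2]; exact hstein'
    have hfG : (fun x => f x * G x)
        = fun x => p x * (deriv q x / q x) * f x - deriv p x * f x := by
      funext x; simp only [hGdef]; ring
    rw [hfG, integral_sub i3 i1]
    linarith
  -- conclude G = 0 a.e., hence everywhere
  have hae : ∀ᵐ x, G x = 0 := by
    apply ae_eq_zero_of_integral_contDiff_smul_eq_zero hGc.locallyIntegrable
    intro g hg hgsupp
    simpa [smul_eq_mul] using key g (hg.of_le (by exact_mod_cast le_top)) hgsupp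
  have hG0 : G = fun _ => (0:ℝ) := (hGc.ae_eq_iff_eq volume continuous_const).mp hae
  have hGx : ∀ x, deriv p x = p x * deriv q x / q x := by
    intro x
    have h := congrFun hG0 x
    simp only [hGdef, sub_eq_zero] at h
    rw [← h]; ring
  -- p/q is constant
  have hdiffp : Differentiable ℝ p := hp.differentiable one_ne_zero
  have hdiffq : Differentiable ℝ q := hq.differentiable one_ne_zero
  have hr : Differentiable ℝ (fun x => p x / q x) := hdiffp.div hdiffq hqne
  have hderiv0 : ∀ x, deriv (fun y => p y / q y) x = 0 := by
    intro x
    rw [deriv_fun_div (hdiffp x) (hdiffq x) (hqne x), hGx x,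
      div_mul_cancel₀ _ (hqne x), sub_self, zero_div]
  have hconst : ∀ x, p x / q x = p 0 / q 0 := fun x =>
    is_const_of_deriv_eq_zero hr hderiv0 x 0
  set c := p 0 / q 0 with hc
  have hpq : ∀ x, p x = c * q x := by
    intro x
    have h := hconst x
    rw [div_eq_iff (hqne x)] at h
    exact h
  have h1 : ∫ x, p x = c * ∫ x, q x := by
    rw [← MeasureTheory.integral_const_mul]
    exact integral_congr_ae (Filter.Eventually.of_forall fun x => hpq x)
  rw [hpInt, hqInt, mul_one] at h1
  have hc1 : c = 1 := h1.symm
  funext x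
  rw [hpq x, hc1, one_mul]
end
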